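/- arXiv:1301.2105 — 6 statements merged into one kernel-verified Lean document; each statement's English description precedes it below -/
import Mathlib

section
/- The polynomial 9Z^6 − 27Z^5 − 45Z^4 + 195Z^3 − 20Z^2 − 372Z + 276 is irreducible over Q. -/
open Polynomial

section Stmt5Aux

variable {K : Type*} [Field K]

lemma stmt5_deg_of_dvd_irr {g b : K[X]} (hb : Irreducible b) (h : g ∣ b) :
    g.natDegree = 0 ∨ g.natDegree = b.natDegree := by
  obtain ⟨c, rfl⟩ := h
  rcases hb.isUnit_or_isUnit rfl with hu | hu
  · exact Or.inl (natDegree_eq_zero_of_isUnit hu)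
  · right
    have hg : g ≠ 0 := left_ne_zero_of_mul hb.ne_zero
    have hc : c ≠ 0 := right_ne_zero_of_mul hb.ne_zero
    rw [natDegree_mul hg hc, natDegree_eq_zero_of_isUnit hu, add_zero]

lemma stmt5_deg_of_dvd_mul_irr {g a b : K[X]} (ha : Irreducible a)
    (hb : Irreducible b) (h : g ∣ a * b) :
    g.natDegree = 0 ∨ g.natDegree = a.natDegree ∨ g.natDegree = b.natDegree ∨
      g.natDegree = a.natDegree + b.natDegree := by
  by_cases hag : a ∣ g
  · obtain ⟨g', rfl⟩ := hag
    have hg' : g' ∣ b := (mul_dvd_mul_iff_left ha.ne_zero).mp h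
    have hg'0 : g' ≠ 0 := by
      rintro rfl
      exact hb.ne_zero (zero_dvd_iff.mp hg')
    rcases stmt5_deg_of_dvd_irr hb hg' with h0 | h0 <;>
        rw [natDegree_mul ha.ne_zero hg'0, h0]
    · simp
    · simp
  · have hcop : IsCoprime g a := (ha.coprime_iff_not_dvd.mpr hag).symm
    have hgb : g ∣ b := hcop.dvd_of_dvd_mul_left h
    rcases stmt5_deg_of_dvd_irr hb hgb with h0 | h0 <;> simp [h0]

lemma stmt5_even_deg {g a b c : K[X]} (ha : Irreducible a) (hb : Irreducible b)
    (hc : Irreducible c) (da : a.natDegree = 2) (db : b.natDegree = 2)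
    (dc : c.natDegree = 2) (h : g ∣ a * (b * c)) : Even g.natDegree := by
  by_cases hag : a ∣ g
  · obtain ⟨g', rfl⟩ := hag
    have hg' : g' ∣ b * c := (mul_dvd_mul_iff_left ha.ne_zero).mp h
    have hg'0 : g' ≠ 0 := by
      rintro rfl
      exact mul_ne_zero hb.ne_zero hc.ne_zero (zero_dvd_iff.mp hg')
    rw [natDegree_mul ha.ne_zero hg'0, da]
    have hval := stmt5_deg_of_dvd_mul_irr hb hc hg'
    rw [db, dc] at hval
    rcases hval with h0 | h0 | h0 | h0 <;> rw [h0] <;> decide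
  · have hcop : IsCoprime g a := (ha.coprime_iff_not_dvd.mpr hag).symm
    have hgb : g ∣ b * c := hcop.dvd_of_dvd_mul_left h
    have hval := stmt5_deg_of_dvd_mul_irr hb hc hgb
    rw [db, dc] at hval
    rcases hval with h0 | h0 | h0 | h0 <;> rw [h0] <;> decide

lemma stmt5_map_deg {G H F : ℤ[X]} (φ : ℤ →+* K) (hF : F = G * H)
    (hFd : F.natDegree = 6) (hmd : (F.map φ).natDegree = 6)
    (hG : G ≠ 0) (hH : H ≠ 0) : (G.map φ).natDegree = G.natDegree := by
  have hm0 : F.map φ ≠ 0 := by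
    intro h0; rw [h0, natDegree_zero] at hmd; exact absurd hmd (by norm_num)
  have hGm : G.map φ ≠ 0 := by
    intro h0
    rw [hF, Polynomial.map_mul, h0, zero_mul] at hm0
    exact hm0 rfl
  have hHm : H.map φ ≠ 0 := by
    intro h0
    rw [hF, Polynomial.map_mul, h0, mul_zero] at hm0
    exact hm0 rfl
  have e1 : (G.map φ).natDegree + (H.map φ).natDegree = 6 := by
    rw [← natDegree_mul hGm hHm, ← Polynomial.map_mul, ← hF, hmd]
  have e2 : G.natDegree + H.natDegree = 6 := by
    rw [← natDegree_mul hG hH, ← hF, hFd]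
  have l1 : (G.map φ).natDegree ≤ G.natDegree := natDegree_map_le
  have l2 : (H.map φ).natDegree ≤ H.natDegree := natDegree_map_le
  omega

instance stmt5_fact19 : Fact (Nat.Prime 19) := ⟨by norm_num⟩
instance stmt5_fact11 : Fact (Nat.Prime 11) := ⟨by norm_num⟩

lemma stmt5_nineteen : (19 : (ZMod 19)[X]) = 0 := by
  have h1 : ((19:ℕ) : ZMod 19) = 0 := by decide
  have h2 := Polynomial.C_eq_natCast (R := ZMod 19) (19:ℕ)
  rw [h1] at h2
  rw [show ((19:ℕ):(ZMod 19)[X]) = (19 : (ZMod 19)[X]) by norm_cast] at h2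
  simpa using h2.symm

lemma stmt5_eleven : (11 : (ZMod 11)[X]) = 0 := by
  have h1 : ((11:ℕ) : ZMod 11) = 0 := by decide
  have h2 := Polynomial.C_eq_natCast (R := ZMod 11) (11:ℕ)
  rw [h1] at h2
  rw [show ((11:ℕ):(ZMod 11)[X]) = (11 : (ZMod 11)[X]) by norm_cast] at h2
  simpa using h2.symm

lemma stmt5_dA19 : (X^3 + 2*X^2 + 18*X + 2 : (ZMod 19)[X]).natDegree = 3 := by
  compute_degree!

lemma stmt5_dB19 : (9*X^3 + 12*X^2 + 16*X + 5 : (ZMod 19)[X]).natDegree = 3 := by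
  compute_degree!

lemma stmt5_dA11 : (X^2 + 1 : (ZMod 11)[X]).natDegree = 2 := by compute_degree!

lemma stmt5_dB11 : (X^2 + 5*X + 3 : (ZMod 11)[X]).natDegree = 2 := by compute_degree!

lemma stmt5_dC11 : (9*X^2 + 5*X + 4 : (ZMod 11)[X]).natDegree = 2 := by compute_degree!

lemma stmt5_irrA19 : Irreducible (X^3 + 2*X^2 + 18*X + 2 : (ZMod 19)[X]) := by
  have hd := stmt5_dA19
  have h0 : (X^3 + 2*X^2 + 18*X + 2 : (ZMod 19)[X]) ≠ 0 := by
    intro h; rw [h, natDegree_zero] at hd; exact absurd hd (by norm_num)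
  refine (irreducible_iff_roots_eq_zero_of_degree_le_three
    (p := (X^3 + 2*X^2 + 18*X + 2 : (ZMod 19)[X]))
    (by rw [hd]; omega) (by rw [hd])).mpr ?_
  apply Multiset.eq_zero_of_forall_notMem
  intro x hx
  rw [mem_roots h0] at hx
  simp only [IsRoot, eval_add, eval_mul, eval_pow, eval_X, eval_ofNat] at hx
  exact absurd hx (by revert x; decide)

lemma stmt5_irrB19 : Irreducible (9*X^3 + 12*X^2 + 16*X + 5 : (ZMod 19)[X]) := by
  have hd := stmt5_dB19
  have h0 : (9*X^3 + 12*X^2 + 16*X + 5 : (ZMod 19)[X]) ≠ 0 := by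
    intro h; rw [h, natDegree_zero] at hd; exact absurd hd (by norm_num)
  refine (irreducible_iff_roots_eq_zero_of_degree_le_three
    (p := (9*X^3 + 12*X^2 + 16*X + 5 : (ZMod 19)[X]))
    (by rw [hd]; omega) (by rw [hd])).mpr ?_
  apply Multiset.eq_zero_of_forall_notMem
  intro x hx
  rw [mem_roots h0] at hx
  simp only [IsRoot, eval_add, eval_mul, eval_pow, eval_X, eval_ofNat] at hx
  exact absurd hx (by revert x; decide)

lemma stmt5_irrA11 : Irreducible (X^2 + 1 : (ZMod 11)[X]) := by
  have hd := stmt5_dA11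
  have h0 : (X^2 + 1 : (ZMod 11)[X]) ≠ 0 := by
    intro h; rw [h, natDegree_zero] at hd; exact absurd hd (by norm_num)
  refine (irreducible_iff_roots_eq_zero_of_degree_le_three
    (p := (X^2 + 1 : (ZMod 11)[X])) (by rw [hd]) (by rw [hd]; omega)).mpr ?_
  apply Multiset.eq_zero_of_forall_notMem
  intro x hx
  rw [mem_roots h0] at hx
  simp only [IsRoot, eval_add, eval_mul, eval_pow, eval_X, eval_one] at hx
  exact absurd hx (by revert x; decide)

lemma stmt5_irrB11 : Irreducible (X^2 + 5*X + 3 : (ZMod 11)[X]) := by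
  have hd := stmt5_dB11
  have h0 : (X^2 + 5*X + 3 : (ZMod 11)[X]) ≠ 0 := by
    intro h; rw [h, natDegree_zero] at hd; exact absurd hd (by norm_num)
  refine (irreducible_iff_roots_eq_zero_of_degree_le_three
    (p := (X^2 + 5*X + 3 : (ZMod 11)[X])) (by rw [hd]) (by rw [hd]; omega)).mpr ?_
  apply Multiset.eq_zero_of_forall_notMem
  intro x hx
  rw [mem_roots h0] at hx
  simp only [IsRoot, eval_add, eval_mul, eval_pow, eval_X, eval_ofNat] at hx
  exact absurd hx (by revert x; decide)

lemma stmt5_irrC11 : Irreducible (9*X^2 + 5*X + 4 : (ZMod 11)[X]) := by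
  have hd := stmt5_dC11
  have h0 : (9*X^2 + 5*X + 4 : (ZMod 11)[X]) ≠ 0 := by
    intro h; rw [h, natDegree_zero] at hd; exact absurd hd (by norm_num)
  refine (irreducible_iff_roots_eq_zero_of_degree_le_three
    (p := (9*X^2 + 5*X + 4 : (ZMod 11)[X])) (by rw [hd]) (by rw [hd]; omega)).mpr ?_
  apply Multiset.eq_zero_of_forall_notMem
  intro x hx
  rw [mem_roots h0] at hx
  simp only [IsRoot, eval_add, eval_mul, eval_pow, eval_X, eval_ofNat] at hx
  exact absurd hx (by revert x; decide)

end Stmt5Aux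

noncomputable def stmt5_F : ℤ[X] :=
  9 * X ^ 6 - 27 * X ^ 5 - 45 * X ^ 4 + 195 * X ^ 3 - 20 * X ^ 2 - 372 * X + 276

lemma stmt5_Fdeg : stmt5_F.natDegree = 6 := by unfold stmt5_F; compute_degree!

lemma stmt5_Fcoeff6 : stmt5_F.coeff 6 = 9 := by
  simp [stmt5_F, coeff_add, coeff_sub, coeff_ofNat_mul, coeff_X]

lemma stmt5_Fcoeff2 : stmt5_F.coeff 2 = -20 := by
  simp [stmt5_F, coeff_add, coeff_sub, coeff_ofNat_mul, coeff_X]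

set_option maxHeartbeats 800000 in
lemma stmt5_Fmap19 : stmt5_F.map (Int.castRingHom (ZMod 19)) =
    (X^3 + 2*X^2 + 18*X + 2) * (9*X^3 + 12*X^2 + 16*X + 5) := by
  have hsplit : stmt5_F = (X^3 + 2*X^2 + 18*X + 2) * (9*X^3 + 12*X^2 + 16*X + 5)
      + 19 * (-3*X^5 - 13*X^4 - 4*X^3 - 18*X^2 - 26*X + 14) := by
    unfold stmt5_F; ring
  rw [hsplit]
  simp only [Polynomial.map_add, Polynomial.map_mul, Polynomial.map_pow,
    Polynomial.map_ofNat, Polynomial.map_X, Polynomial.map_neg, Polynomial.map_sub]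
  rw [stmt5_nineteen]; ring

set_option maxHeartbeats 800000 in
lemma stmt5_Fmap11 : stmt5_F.map (Int.castRingHom (ZMod 11)) =
    (X^2 + 1) * ((X^2 + 5*X + 3) * (9*X^2 + 5*X + 4)) := by
  have hsplit : stmt5_F = (X^2 + 1) * ((X^2 + 5*X + 3) * (9*X^2 + 5*X + 4))
      + 11 * (-7*X^5 - 10*X^4 + 10*X^3 - 8*X^2 - 37*X + 24) := by
    unfold stmt5_F; ring
  rw [hsplit]
  simp only [Polynomial.map_add, Polynomial.map_mul, Polynomial.map_pow,
    Polynomial.map_ofNat, Polynomial.map_X, Polynomial.map_neg, Polynomial.map_sub,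
    Polynomial.map_one]
  rw [stmt5_eleven]; ring

set_option maxHeartbeats 400000 in
lemma stmt5_Fmap19_deg : (stmt5_F.map (Int.castRingHom (ZMod 19))).natDegree = 6 := by
  rw [stmt5_Fmap19]; compute_degree!

set_option maxHeartbeats 400000 in
lemma stmt5_Fmap11_deg : (stmt5_F.map (Int.castRingHom (ZMod 11))).natDegree = 6 := by
  rw [stmt5_Fmap11]; compute_degree!

lemma stmt5_Fprim : stmt5_F.IsPrimitive := by
  intro r hr
  rw [C_dvd_iff_dvd_coeff] at hr
  have h9 : r ∣ 9 := by have := hr 6; rwa [stmt5_Fcoeff6] at this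
  have h20 : r ∣ 20 := by
    have := hr 2; rw [stmt5_Fcoeff2] at this; exact dvd_neg.mp this
  have h1 : r ∣ 1 := by
    have : r ∣ 9 * 9 - 4 * 20 := dvd_sub (h9.mul_left 9) (h20.mul_left 4)
    norm_num at this
    exact this
  exact isUnit_of_dvd_one h1

lemma stmt5_Firr : Irreducible stmt5_F := by
  have hFd := stmt5_Fdeg
  have hFne : stmt5_F ≠ 0 := fun h => by
    rw [h, natDegree_zero] at hFd; exact absurd hFd (by norm_num)
  constructor
  · exact not_isUnit_of_natDegree_pos stmt5_F (by omega)
  · intro G H hGH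
    by_contra hcon
    push_neg at hcon
    obtain ⟨hG, hH⟩ := hcon
    have hG0 : G ≠ 0 := fun h => hFne (by rw [hGH, h, zero_mul])
    have hH0 : H ≠ 0 := fun h => hFne (by rw [hGH, h, mul_zero])
    have hsum : G.natDegree + H.natDegree = 6 := by
      rw [← natDegree_mul hG0 hH0, ← hGH, hFd]
    have hconst : ∀ P Q : ℤ[X], stmt5_F = P * Q → ¬IsUnit P → 1 ≤ P.natDegree := by
      intro P Q hPQ hP
      rcases Nat.eq_zero_or_pos P.natDegree with h0 | h
      · exfalso
        have hPC := eq_C_of_natDegree_eq_zero h0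
        apply hP
        rw [hPC]
        exact isUnit_C.mpr (stmt5_Fprim _ (by rw [← hPC]; exact Dvd.intro Q hPQ.symm))
      · omega
    have hG1 : 1 ≤ G.natDegree := hconst G H hGH hG
    have hH1 : 1 ≤ H.natDegree := hconst H G (by rw [hGH, mul_comm]) hH
    -- mod 19 : G has degree 3
    have hG3 : G.natDegree = 3 := by
      have hGd := stmt5_map_deg (Int.castRingHom (ZMod 19)) hGH hFd stmt5_Fmap19_deg hG0 hH0
      have hdvd : G.map (Int.castRingHom (ZMod 19)) ∣
          (X^3 + 2*X^2 + 18*X + 2 : (ZMod 19)[X]) * (9*X^3 + 12*X^2 + 16*X + 5) := by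
        rw [← stmt5_Fmap19, hGH, Polynomial.map_mul]
        exact Dvd.intro _ rfl
      have hval := stmt5_deg_of_dvd_mul_irr stmt5_irrA19 stmt5_irrB19 hdvd
      rw [hGd, stmt5_dA19, stmt5_dB19] at hval
      omega
    -- mod 11 : G has even degree
    have hGe : Even G.natDegree := by
      have hGd := stmt5_map_deg (Int.castRingHom (ZMod 11)) hGH hFd stmt5_Fmap11_deg hG0 hH0
      have hdvd : G.map (Int.castRingHom (ZMod 11)) ∣
          (X^2 + 1 : (ZMod 11)[X]) * ((X^2 + 5*X + 3) * (9*X^2 + 5*X + 4)) := by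
        rw [← stmt5_Fmap11, hGH, Polynomial.map_mul]
        exact Dvd.intro _ rfl
      have := stmt5_even_deg stmt5_irrA11 stmt5_irrB11 stmt5_irrC11
        stmt5_dA11 stmt5_dB11 stmt5_dC11 hdvd
      rwa [hGd] at this
    rw [hG3] at hGe
    exact absurd hGe (by decide)

theorem stmt_5 :
    Irreducible (9 * X ^ 6 - 27 * X ^ 5 - 45 * X ^ 4 + 195 * X ^ 3 - 20 * X ^ 2
      - 372 * X + 276 : ℚ[X]) := by
  have hQ := (Polynomial.IsPrimitive.Int.irreducible_iff_irreducible_map_cast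
    stmt5_Fprim).mp stmt5_Firr
  have hQeq : stmt5_F.map (Int.castRingHom ℚ) = (9 * X ^ 6 - 27 * X ^ 5 - 45 * X ^ 4
      + 195 * X ^ 3 - 20 * X ^ 2 - 372 * X + 276 : ℚ[X]) := by
    unfold stmt5_F
    simp [Polynomial.map_ofNat]
  rwa [hQeq] at hQ
end

section
/- The polynomial 9Z^6 − 27Z^5 − 45Z^4 + 195Z^3 − 20Z^2 − 372Z + 276 has no real roots. -/
/-! Multiplied by `130800`, the sextic is a weighted sum of three squares plus the positive
constant `45832`, so it is positive over every linearly ordered commutative ring. -/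

theorem sextic_sos_identity {R : Type*} [CommRing R] (x : R) :
    130800 * (9 * x ^ 6 - 27 * x ^ 5 - 45 * x ^ 4 + 195 * x ^ 3 - 20 * x ^ 2 - 372 * x + 276) =
      327 * (60 * x ^ 3 - 90 * x ^ 2 - 225 * x + 328) ^ 2 + 327 * (30 * x ^ 2 - 31 * x - 20) ^ 2
        + 2 * (327 * x - 610) ^ 2 + 45832 := by
  ring

theorem sextic_pos {K : Type*} [CommRing K] [LinearOrder K] [IsStrictOrderedRing K] (x : K) :
    0 < 9 * x ^ 6 - 27 * x ^ 5 - 45 * x ^ 4 + 195 * x ^ 3 - 20 * x ^ 2 - 372 * x + 276 := by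
  have h : 0 < 130800 * (9 * x ^ 6 - 27 * x ^ 5 - 45 * x ^ 4 + 195 * x ^ 3 - 20 * x ^ 2
      - 372 * x + 276) := by
    rw [sextic_sos_identity]
    positivity
  exact pos_of_mul_pos_right h (by norm_num)

theorem stmt_6 :
    ∀ x : ℝ, 9 * x ^ 6 - 27 * x ^ 5 - 45 * x ^ 4 + 195 * x ^ 3 - 20 * x ^ 2
      - 372 * x + 276 ≠ 0 :=
  fun x => (sextic_pos x).ne'
end

section
/- The polynomial 50Z^4 + 300Z^3 + 685Z^2 + 720Z + 302 is irreducible over Q and its splitting field is Q(√2, i√15), a degree-4 extension of Q. -/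
/-!
Over `ℚ(√2)` the quartic `P` factors into two quadratics, since
`P / 50 = (X² + 3X + 13/5)² - 2 (X/2 + 3/5)²`, and their discriminants are
`-15 ((2 ± √2)/10)²`. So the roots are `ρ = (-6 ± √2)/4 ± i√15 (2 ± √2)/20`, all in
`K = ℚ(√2, i√15)`, which has degree 4 because `√2 ∉ ℚ` and `i√15 ∉ ℚ(√2) ⊆ ℝ`.
The root `ρ = (-6 + √2)/4 + i√15 (2 + √2)/20` alone generates `K`, as `√2 = 2(5ρ² + 15ρ + 13)/(5ρ + 6)` and
`i√15 = (20ρ + 30 - 5√2)/(2 + √2)`; hence `[ℚ(ρ) : ℚ] = 4 = deg P`, so `P` is irreducible,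
and `K`, being generated by the roots, is the splitting field.
-/

open Polynomial

/-- `ℚ(√2, i√15)` as a subfield of `ℂ`. -/
noncomputable def Kfield11 : IntermediateField ℚ ℂ :=
  IntermediateField.adjoin ℚ
    ({((Real.sqrt 2 : ℝ) : ℂ), Complex.I * ((Real.sqrt 15 : ℝ) : ℂ)} : Set ℂ)

open IntermediateField Module

theorem IntermediateField.finrank_adjoin_simple_eq_two_of_sq_eq {F L : Type*} [Field F]
    [Field L] [Algebra F L] {x : L} {d : F} (hx : x ^ 2 = algebraMap F L d)
    (hd : ¬IsSquare d) : finrank F F⟮x⟯ = 2 := by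
  have hmonic : (X ^ 2 - C d).Monic := monic_X_pow_sub_C _ two_ne_zero
  have hirr : Irreducible (X ^ 2 - C d) :=
    X_pow_sub_C_irreducible_of_prime Nat.prime_two fun b hb => hd ⟨b, by rw [← hb, sq]⟩
  have hint : IsIntegral F x := ⟨X ^ 2 - C d, hmonic, by simp [hx]⟩
  rw [adjoin.finrank hint, ← minpoly.eq_of_irreducible_of_monic hirr (by simp [hx]) hmonic,
    natDegree_X_pow_sub_C]

theorem Polynomial.irreducible_of_aeval_eq_zero_of_natDegree_le_finrank {K L : Type*} [Field K]
    [Field L] [Algebra K L] {x : L} {p : K[X]} (hp : p ≠ 0) (hpx : aeval x p = 0)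
    (hdeg : p.natDegree ≤ finrank K K⟮x⟯) : Irreducible p := by
  have hx : IsIntegral K x := IsAlgebraic.isIntegral ⟨p, hp, hpx⟩
  rw [adjoin.finrank hx] at hdeg
  exact (associated_of_dvd_of_natDegree_le (minpoly.dvd K x hpx) hp hdeg).irreducible
    (minpoly.irreducible hx)

namespace EpsilonQuartic

noncomputable section

def α : ℂ := ((Real.sqrt 2 : ℝ) : ℂ)

def β : ℂ := Complex.I * ((Real.sqrt 15 : ℝ) : ℂ)

def P : ℚ[X] := 50 * X ^ 4 + 300 * X ^ 3 + 685 * X ^ 2 + 720 * X + 302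

def ρ (c d : ℂ) : ℂ := (-6 + c) / 4 + d * (2 + c) / 20

def rootMultiset : Multiset ℂ := {ρ α β, ρ α (-β), ρ (-α) β, ρ (-α) (-β)}

def realField : IntermediateField ℚ ℂ := ((Algebra.ofId ℝ ℂ).restrictScalars ℚ).fieldRange

theorem α_sq : α ^ 2 = 2 := by
  simp [α, ← Complex.ofReal_pow]

theorem β_sq : β ^ 2 = -15 := by
  simp [β, mul_pow, ← Complex.ofReal_pow]

theorem Kfield11_eq : Kfield11 = ℚ⟮α, β⟯ := rfl

theorem α_mem_Kfield11 : α ∈ Kfield11 := subset_adjoin _ _ (by simp [α])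

theorem β_mem_Kfield11 : β ∈ Kfield11 := subset_adjoin _ _ (by simp [β])

theorem finrank_adjoin_α : finrank ℚ ℚ⟮α⟯ = 2 :=
  finrank_adjoin_simple_eq_two_of_sq_eq (d := 2) (by simp [α_sq])
    (by rw [Rat.isSquare_iff]; norm_num)

theorem adjoin_α_le_realField : ℚ⟮α⟯ ≤ realField :=
  adjoin_simple_le_iff.2 ⟨Real.sqrt 2, rfl⟩

theorem finrank_adjoin_α_adjoin_β : finrank ℚ⟮α⟯ ℚ⟮α⟯⟮β⟯ = 2 := by
  refine finrank_adjoin_simple_eq_two_of_sq_eq (d := -15) (by rw [β_sq]; rfl) ?_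
  rintro ⟨b, hb⟩
  obtain ⟨y, hy⟩ := adjoin_α_le_realField b.2
  have hyC : ((y ^ 2 : ℝ) : ℂ) = -15 := by
    rw [Complex.ofReal_pow, show (y : ℂ) = b from hy, sq]
    exact congrArg Subtype.val hb.symm
  have hy2 : y ^ 2 = -15 := by exact_mod_cast hyC
  nlinarith [sq_nonneg y]

theorem finrank_Kfield11 : finrank ℚ Kfield11 = 4 := by
  rw [Kfield11_eq, ← adjoin_simple_adjoin_simple]
  change finrank ℚ ℚ⟮α⟯⟮β⟯ = 4
  rw [← finrank_mul_finrank ℚ ℚ⟮α⟯, finrank_adjoin_α, finrank_adjoin_α_adjoin_β]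

theorem sub_ρ_mul_sub_ρ {c d : ℂ} (hc : c ^ 2 = 2) (hd : d ^ 2 = -15) (x : ℂ) :
    (x - ρ c d) * (x - ρ c (-d)) = x ^ 2 + (6 - c) / 2 * x + (13 - 3 * c) / 5 := by
  unfold ρ
  linear_combination (-(2 + c) ^ 2 / 400) * hd + (1 / 10) * hc

theorem ρ_mem {F : IntermediateField ℚ ℂ} {c d : ℂ} (hc : c ∈ F) (hd : d ∈ F) :
    ρ c d ∈ F := by
  unfold ρ
  aesop

theorem map_P_eq : P.map (algebraMap ℚ ℂ) = C 50 * (rootMultiset.map (X - C ·)).prod := by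
  refine Polynomial.funext fun x => ?_
  have hα' : (-α) ^ 2 = 2 := by rw [neg_sq, α_sq]
  simp only [rootMultiset, Multiset.insert_eq_cons, Multiset.map_cons, Multiset.map_singleton,
    Multiset.prod_cons, Multiset.prod_singleton, eval_mul, eval_C, eval_sub, eval_X, ← mul_assoc]
  rw [mul_assoc, sub_ρ_mul_sub_ρ hα' β_sq, mul_assoc 50, sub_ρ_mul_sub_ρ α_sq β_sq]
  simp [P]
  linear_combination (5 * x + 6) ^ 2 / 2 * α_sq

theorem natDegree_P : P.natDegree = 4 := by
  unfold P
  compute_degree!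

theorem aeval_ρ_eq_zero : aeval (ρ α β) P = 0 := by
  rw [aeval_def, ← eval_map, map_P_eq]
  simp [rootMultiset]

theorem five_mul_ρ_add_six_ne_zero : 5 * ρ α β + 6 ≠ 0 := by
  intro h
  have hP := aeval_ρ_eq_zero
  rw [show ρ α β = -6 / 5 by linear_combination h / 5] at hP
  norm_num [P, map_ofNat] at hP

theorem two_add_α_ne_zero : 2 + α ≠ 0 := by
  intro h
  have h2 := α_sq
  rw [show α = -2 by linear_combination h] at h2
  norm_num at h2

theorem α_eq_div : α = (10 * ρ α β ^ 2 + 30 * ρ α β + 26) / (5 * ρ α β + 6) := by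
  rw [eq_div_iff five_mul_ρ_add_six_ne_zero]
  linear_combination 10 * sub_ρ_mul_sub_ρ α_sq β_sq (ρ α β)

theorem β_eq_div : β = (20 * ρ α β + 30 - 5 * α) / (2 + α) := by
  rw [eq_div_iff two_add_α_ne_zero, ρ]
  ring

theorem adjoin_ρ_eq_Kfield11 : ℚ⟮ρ α β⟯ = Kfield11 := by
  refine le_antisymm (adjoin_simple_le_iff.2 (ρ_mem α_mem_Kfield11 β_mem_Kfield11)) ?_
  have hρ := mem_adjoin_simple_self ℚ (ρ α β)
  have hα : α ∈ ℚ⟮ρ α β⟯ := by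
    have h : (10 * ρ α β ^ 2 + 30 * ρ α β + 26) / (5 * ρ α β + 6) ∈ ℚ⟮ρ α β⟯ := by aesop
    rwa [← α_eq_div] at h
  have hβ : β ∈ ℚ⟮ρ α β⟯ := by
    have h : (20 * ρ α β + 30 - 5 * α) / (2 + α) ∈ ℚ⟮ρ α β⟯ := by aesop
    rwa [← β_eq_div] at h
  rw [Kfield11_eq, adjoin_le_iff]
  rintro _ (rfl | rfl)
  exacts [hα, hβ]

theorem irreducible_P : Irreducible P :=
  irreducible_of_aeval_eq_zero_of_natDegree_le_finrank
    (ne_zero_of_natDegree_gt (n := 0) (by rw [natDegree_P]; norm_num)) aeval_ρ_eq_zero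
    (by rw [adjoin_ρ_eq_Kfield11, finrank_Kfield11, natDegree_P])

theorem rootSet_P : P.rootSet ℂ = {ρ α β, ρ α (-β), ρ (-α) β, ρ (-α) (-β)} := by
  rw [rootSet, aroots_def, map_P_eq, roots_C_mul _ (by norm_num), roots_multiset_prod_X_sub_C]
  ext z
  simp [rootMultiset, Multiset.insert_eq_cons]

theorem adjoin_rootSet_P : adjoin ℚ (P.rootSet ℂ) = Kfield11 := by
  refine le_antisymm ?_ ?_
  · rw [adjoin_le_iff, rootSet_P]
    rintro _ (rfl | rfl | rfl | rfl) <;>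
      apply_rules [ρ_mem, neg_mem, α_mem_Kfield11, β_mem_Kfield11]
  · rw [← adjoin_ρ_eq_Kfield11, adjoin_simple_le_iff, rootSet_P]
    exact subset_adjoin _ _ (by simp)

end

end EpsilonQuartic

theorem stmt_11 :
    Irreducible (50 * X ^ 4 + 300 * X ^ 3 + 685 * X ^ 2 + 720 * X + 302 : ℚ[X]) ∧
    Module.finrank ℚ Kfield11 = 4 ∧
    Nonempty ((50 * X ^ 4 + 300 * X ^ 3 + 685 * X ^ 2 + 720 * X + 302 : ℚ[X]).SplittingField
      ≃ₐ[ℚ] Kfield11) := by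
  refine ⟨EpsilonQuartic.irreducible_P, EpsilonQuartic.finrank_Kfield11, ?_⟩
  have : IsSplittingField ℚ Kfield11 EpsilonQuartic.P :=
    EpsilonQuartic.adjoin_rootSet_P ▸ adjoin_rootSet_isSplittingField (IsAlgClosed.splits _)
  exact ⟨(IsSplittingField.algEquiv Kfield11 EpsilonQuartic.P).symm⟩
end

section
/- The polynomial 49Z^4 + 245Z^3 + 357Z^2 + 56Z + 22 is irreducible over Q but becomes reducible over Q(i√7), factoring into two quadratics over Q(i√7). -/
/-!
Irreducibility over `ℚ`: the quartic is primitive over `ℤ`, its leading coefficient `49` survives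
modulo `5`, and modulo `5` it is `4 (X⁴ + 3X² + 4X + 3)`, which has neither roots nor quadratic
factors in `𝔽₅[X]`; a factorisation over `ℤ` would therefore reduce to one over `𝔽₅`.

Factorisation over `ℚ(i√7)`: with `ω = (1 + i√7)/2`, a root of `ω² - ω + 2`, the quartic is
`(7X² + (16 + 3ω)X + (4 - 3ω)) (7X² + (19 - 3ω)X + (1 + 3ω))`, the product of a quadratic and its
Galois conjugate (`ω ↦ 1 - ω`).
-/

open Polynomial

/-- `ℚ(i√7)` as a subfield of `ℂ`. -/
noncomputable def Kfield12 : IntermediateField ℚ ℂ :=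
  IntermediateField.adjoin ℚ ({Complex.I * ((Real.sqrt 7 : ℝ) : ℂ)} : Set ℂ)

namespace Polynomial

theorem Monic.eq_X_sq_add_C_mul_X_add_C {R : Type*} [Semiring R] {p : R[X]} (hm : p.Monic)
    (hnd : p.natDegree = 2) : p = X ^ 2 + C (p.coeff 1) * X + C (p.coeff 0) := by
  conv_lhs => rw [hm.as_sum, hnd]
  simp only [Finset.sum_range_succ, Finset.sum_range_zero, pow_zero, pow_one, mul_one, zero_add]
  abel

theorem Monic.irreducible_of_natDegree_eq_four {R : Type*} [CommRing R] [IsDomain R] {p : R[X]}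
    (hp : p.Monic) (hdeg : p.natDegree = 4) (hroot : ∀ x, ¬ p.IsRoot x)
    (hquad : ∀ b c d e : R, p ≠ (X ^ 2 + C b * X + C c) * (X ^ 2 + C d * X + C e)) :
    Irreducible p := by
  have hp1 : p ≠ 1 := by rintro rfl; simp at hdeg
  rw [hp.irreducible_iff_lt_natDegree_lt hp1, hdeg]
  rintro q hq hqdeg ⟨r, rfl⟩
  have hr : r.Monic := hq.of_mul_monic_left hp
  rw [Finset.mem_Ioc] at hqdeg
  obtain hq1 | hq2 : q.natDegree = 1 ∨ q.natDegree = 2 := by omega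
  · refine hroot (-q.coeff 0) (root_mul_right_of_isRoot _ ?_)
    rw [hq.eq_X_add_C hq1]
    simp
  · have hr2 : r.natDegree = 2 := by rw [hq.natDegree_mul hr] at hdeg; omega
    refine hquad (q.coeff 1) (q.coeff 0) (r.coeff 1) (r.coeff 0) ?_
    rw [← hq.eq_X_sq_add_C_mul_X_add_C hq2, ← hr.eq_X_sq_add_C_mul_X_add_C hr2]

/-- The non-monic analogue of `Polynomial.Monic.irreducible_of_irreducible_map`: primitivity rules
out constant factors, and a nonvanishing reduced leading coefficient keeps degrees unchanged. -/
theorem IsPrimitive.irreducible_of_irreducible_map_of_leadingCoeff_ne_zero {R S : Type*}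
    [CommRing R] [IsDomain R] [CommRing S] [IsDomain S] (φ : R →+* S) {f : R[X]}
    (hf : f.IsPrimitive) (hlc : φ f.leadingCoeff ≠ 0) (h : Irreducible (f.map φ)) :
    Irreducible f := by
  have isUnit_of_isUnit_map : ∀ a b, f = a * b → IsUnit (a.map φ) → IsUnit a := by
    intro a b hab ha
    have hlca : φ a.leadingCoeff ≠ 0 := by
      intro h0; apply hlc; rw [hab, leadingCoeff_mul, map_mul, h0, zero_mul]
    have hdeg : a.natDegree = 0 := by
      rw [← natDegree_map_of_leadingCoeff_ne_zero φ hlca]; exact natDegree_eq_zero_of_isUnit ha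
    rw [eq_C_of_natDegree_eq_zero hdeg] at hab ⊢
    exact isUnit_C.mpr (hf _ (hab ▸ dvd_mul_right _ _))
  refine ⟨fun hu => h.not_isUnit (hu.map (mapRingHom φ)), fun a b hab => ?_⟩
  rw [hab, Polynomial.map_mul] at h
  exact (h.isUnit_or_isUnit rfl).imp (isUnit_of_isUnit_map a b hab)
    (isUnit_of_isUnit_map b a (hab.trans (mul_comm a b)))

end Polynomial

noncomputable def quartic (R : Type*) [Semiring R] : R[X] :=
  49 * X ^ 4 + 245 * X ^ 3 + 357 * X ^ 2 + 56 * X + 22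

theorem map_quartic {R S : Type*} [Semiring R] [Semiring S] (φ : R →+* S) :
    (quartic R).map φ = quartic S := by
  simp only [quartic, Polynomial.map_add, Polynomial.map_mul, Polynomial.map_pow,
    Polynomial.map_X, Polynomial.map_ofNat]

instance fact_prime_five : Fact (Nat.Prime 5) := ⟨by norm_num⟩

theorem irreducible_mod_five : Irreducible (X ^ 4 + 3 * X ^ 2 + 4 * X + 3 : (ZMod 5)[X]) := by
  refine Monic.irreducible_of_natDegree_eq_four (by monicity!) (by compute_degree!) ?_ ?_
  · intro x
    simp only [IsRoot, eval_add, eval_mul, eval_pow, eval_X, eval_ofNat]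
    revert x
    decide
  · intro b c d e h
    have h' := fun x => congrArg (eval x) h
    simp only [eval_add, eval_mul, eval_pow, eval_X, eval_ofNat, eval_C] at h'
    clear h
    -- monic quartics agreeing at all five points of `𝔽₅` are equal, so this check loses nothing
    revert b c d e
    decide

theorem isPrimitive_quartic : (quartic ℤ).IsPrimitive := by
  intro r hr
  rw [C_dvd_iff_dvd_coeff] at hr
  have h4 : r ∣ 49 := by simpa [quartic, coeff_X_pow, coeff_X] using hr 4
  have h0 : r ∣ 22 := by simpa [quartic, coeff_X_pow, coeff_X] using hr 0
  -- `9 * 49 - 20 * 22 = 1`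
  exact isUnit_of_dvd_one (by simpa using (h4.mul_left 9).sub (h0.mul_left 20))

theorem leadingCoeff_quartic : (quartic ℤ).leadingCoeff = 49 := by
  rw [leadingCoeff, show (quartic ℤ).natDegree = 4 by unfold quartic; compute_degree!]
  simp [quartic, coeff_X_pow, coeff_X]

theorem map_quartic_zmod_five :
    (quartic ℤ).map (Int.castRingHom (ZMod 5)) = 4 * (X ^ 4 + 3 * X ^ 2 + 4 * X + 3) := by
  have h5 : (5 : (ZMod 5)[X]) = 0 := CharP.ofNat_eq_zero _ 5
  rw [map_quartic, quartic]
  linear_combination (9 * X ^ 4 + 49 * X ^ 3 + 69 * X ^ 2 + 8 * X + 2) * h5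

theorem irreducible_quartic_int : Irreducible (quartic ℤ) := by
  refine isPrimitive_quartic.irreducible_of_irreducible_map_of_leadingCoeff_ne_zero
    (Int.castRingHom (ZMod 5)) (by rw [leadingCoeff_quartic]; decide) ?_
  have h4 : IsUnit (4 : (ZMod 5)[X]) := by rw [← C_ofNat, isUnit_C]; decide
  rw [map_quartic_zmod_five, irreducible_isUnit_mul h4]
  exact irreducible_mod_five

theorem irreducible_quartic_rat : Irreducible (quartic ℚ) := by
  rw [← map_quartic (Int.castRingHom ℚ),
    ← IsPrimitive.Int.irreducible_iff_irreducible_map_cast isPrimitive_quartic]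
  exact irreducible_quartic_int

theorem quartic_eq_mul {R : Type*} [CommRing R] {ω : R} (hω : ω ^ 2 - ω + 2 = 0) :
    quartic R = (C 7 * X ^ 2 + C (16 + 3 * ω) * X + C (4 - 3 * ω)) *
      (C 7 * X ^ 2 + C (19 - 3 * ω) * X + C (1 + 3 * ω)) := by
  have h : C ω ^ 2 - C ω + 2 = (0 : R[X]) := by
    rw [← C_pow, ← C_sub, ← C_ofNat, ← C_add, hω, C_0]
  simp only [quartic, map_add, map_sub, map_mul, map_ofNat, map_one]
  linear_combination (9 * (X - 1) ^ 2 : R[X]) * h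

noncomputable def sqrtNegSeven : Kfield12 := ⟨_, IntermediateField.subset_adjoin ℚ _ rfl⟩

theorem sqrtNegSeven_sq : sqrtNegSeven ^ 2 = -7 := by
  have h : (Complex.I * ((Real.sqrt 7 : ℝ) : ℂ)) ^ 2 = -7 := by
    rw [mul_pow, Complex.I_sq, ← Complex.ofReal_pow, Real.sq_sqrt (by norm_num)]
    norm_num
  apply (algebraMap Kfield12 ℂ).injective
  rwa [map_pow, map_neg, map_ofNat]

theorem stmt_12 :
    Irreducible (49 * X ^ 4 + 245 * X ^ 3 + 357 * X ^ 2 + 56 * X + 22 : ℚ[X]) ∧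
    ∃ q r : Polynomial Kfield12, q.degree = 2 ∧ r.degree = 2 ∧
      (49 * X ^ 4 + 245 * X ^ 3 + 357 * X ^ 2 + 56 * X + 22 : ℚ[X]).map
        (algebraMap ℚ Kfield12) = q * r := by
  refine ⟨irreducible_quartic_rat, ?_⟩
  set ω : Kfield12 := (1 + sqrtNegSeven) / 2
  have hω : ω ^ 2 - ω + 2 = 0 := by linear_combination (1 / 4 : Kfield12) * sqrtNegSeven_sq
  have h7 : (7 : Kfield12) ≠ 0 := by norm_num
  change ∃ q r : Kfield12[X], _ ∧ _ ∧ (quartic ℚ).map _ = q * r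
  rw [map_quartic, quartic_eq_mul hω]
  exact ⟨_, _, degree_quadratic h7, degree_quadratic h7, rfl⟩
end

section
/- The polynomial 875Z^6 + 5375Z^5 + 13375Z^4 + 18025Z^3 + 14770Z^2 + 7180Z + 1592 is irreducible over Q but becomes reducible over Q(i√55). -/
/-!
Modulo 3 the polynomial is `2` times an irreducible sextic over `𝔽₃`: comparing coefficients
rules out monic factors of degree 1, 2 and 3. As it is primitive and 3 does not divide its leading
coefficient, it is irreducible over `ℤ`, hence over `ℚ` by Gauss's lemma.

Over a field containing a square root `ω` of `-55`, `140` times the polynomial is the product of a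
cubic over `ℤ[ω]` and its conjugate under `ω ↦ -ω`.
-/

open Polynomial

/-- `ℚ(i√55)` as a subfield of `ℂ`. -/
noncomputable def Kfield13 : IntermediateField ℚ ℂ :=
  IntermediateField.adjoin ℚ ({Complex.I * ((Real.sqrt 55 : ℝ) : ℂ)} : Set ℂ)

namespace Polynomial

theorem IsPrimitive.irreducible_of_irreducible_map_of_leadingCoeff {R S : Type*} [CommRing R]
    [IsDomain R] [CommRing S] [IsDomain S] {φ : R →+* S} {f : R[X]} (hf : f.IsPrimitive)
    (hlc : φ f.leadingCoeff ≠ 0) (hirr : Irreducible (f.map φ)) : Irreducible f := by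
  refine ⟨fun hu => hirr.not_isUnit (hu.map (mapRingHom φ)), fun a b hab => ?_⟩
  have hlc_ab : φ a.leadingCoeff * φ b.leadingCoeff ≠ 0 := by
    rwa [← map_mul, ← leadingCoeff_mul, ← hab]
  have isUnit_of_dvd (c : R[X]) (hcf : c ∣ f) (hc : φ c.leadingCoeff ≠ 0)
      (hu : IsUnit (c.map φ)) : IsUnit c := by
    have hdeg : c.natDegree = 0 := by
      rw [← natDegree_map_of_leadingCoeff_ne_zero φ hc]
      exact natDegree_eq_zero_of_isUnit hu
    rw [eq_C_of_natDegree_eq_zero hdeg] at hcf ⊢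
    exact isUnit_C.mpr (hf _ hcf)
  rw [hab, Polynomial.map_mul] at hirr
  exact (hirr.isUnit_or_isUnit rfl).imp
    (isUnit_of_dvd a ⟨b, hab⟩ (left_ne_zero_of_mul hlc_ab))
    (isUnit_of_dvd b ⟨a, hab.trans (mul_comm a b)⟩ (right_ne_zero_of_mul hlc_ab))

end Polynomial

noncomputable def sextic (R : Type*) [CommRing R] : R[X] :=
  875 * X ^ 6 + 5375 * X ^ 5 + 13375 * X ^ 4 + 18025 * X ^ 3 + 14770 * X ^ 2 + 7180 * X + 1592

theorem map_sextic {R S : Type*} [CommRing R] [CommRing S] (φ : R →+* S) :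
    (sextic R).map φ = sextic S := by
  simp [sextic]

theorem natDegree_sextic_int : (sextic ℤ).natDegree = 6 := by
  unfold sextic
  compute_degree!

theorem leadingCoeff_sextic_int : (sextic ℤ).leadingCoeff = 875 := by
  rw [leadingCoeff, natDegree_sextic_int]
  simp [sextic, coeff_X]

theorem isPrimitive_sextic_int : (sextic ℤ).IsPrimitive := by
  intro r hr
  rw [C_dvd_iff_dvd_coeff] at hr
  have h0 : r ∣ 1592 := by simpa [sextic, coeff_X] using hr 0
  have h6 : r ∣ 875 := by simpa [sextic, coeff_X] using hr 6
  have h1 : r ∣ 1 := by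
    simpa [show Int.gcd 1592 875 = 1 by norm_num] using Int.dvd_coe_gcd h0 h6
  exact isUnit_of_dvd_one h1

noncomputable def sexticModThree : (ZMod 3)[X] :=
  X ^ 6 + X ^ 5 + 2 * X ^ 4 + 2 * X ^ 3 + 2 * X ^ 2 + 2 * X + 1

theorem sextic_zmod_three : sextic (ZMod 3) = C 2 * sexticModThree := by
  simp only [sextic, sexticModThree, map_ofNat]
  ring_nf
  reduce_mod_char

theorem monic_sexticModThree : sexticModThree.Monic := by
  unfold sexticModThree
  monicity!

theorem natDegree_sexticModThree : sexticModThree.natDegree = 6 := by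
  unfold sexticModThree
  compute_degree!

theorem coeff_of_sexticModThree_eq {p : (ZMod 3)[X]} (h : sexticModThree = p) :
    p.coeff 0 = 1 ∧ p.coeff 1 = 2 ∧ p.coeff 2 = 2 ∧ p.coeff 3 = 2 ∧ p.coeff 4 = 2 ∧
      p.coeff 5 = 1 := by
  subst h
  simp [sexticModThree, coeff_X, coeff_one]

theorem sexticModThree_ne_linear_mul_quintic (a₀ b₀ b₁ b₂ b₃ b₄ : ZMod 3) :
    sexticModThree ≠
      (X + C a₀) * (X ^ 5 + C b₄ * X ^ 4 + C b₃ * X ^ 3 + C b₂ * X ^ 2 + C b₁ * X + C b₀) := by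
  refine mt coeff_of_sexticModThree_eq ?_
  simp [coeff_mul, Finset.Nat.sum_antidiagonal_succ, coeff_X_pow, coeff_C, coeff_X]
  revert a₀ b₀ b₁ b₂ b₃ b₄
  decide

theorem sexticModThree_ne_quadratic_mul_quartic (a₀ a₁ b₀ b₁ b₂ b₃ : ZMod 3) :
    sexticModThree ≠
      (X ^ 2 + C a₁ * X + C a₀) * (X ^ 4 + C b₃ * X ^ 3 + C b₂ * X ^ 2 + C b₁ * X + C b₀) := by
  refine mt coeff_of_sexticModThree_eq ?_
  simp [coeff_mul, Finset.Nat.sum_antidiagonal_succ, coeff_X_pow, coeff_C, coeff_X]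
  revert a₀ a₁ b₀ b₁ b₂ b₃
  decide

theorem sexticModThree_ne_cubic_mul_cubic (a₀ a₁ a₂ b₀ b₁ b₂ : ZMod 3) :
    sexticModThree ≠
      (X ^ 3 + C a₂ * X ^ 2 + C a₁ * X + C a₀) * (X ^ 3 + C b₂ * X ^ 2 + C b₁ * X + C b₀) := by
  refine mt coeff_of_sexticModThree_eq ?_
  simp [coeff_mul, Finset.Nat.sum_antidiagonal_succ, coeff_X_pow, coeff_C, coeff_X]
  revert a₀ a₁ a₂ b₀ b₁ b₂
  decide

theorem irreducible_sexticModThree : Irreducible sexticModThree := by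
  have hne_one : sexticModThree ≠ 1 := fun h => by simpa [h] using natDegree_sexticModThree
  rw [monic_sexticModThree.irreducible_iff_lt_natDegree_lt hne_one, natDegree_sexticModThree]
  rintro q hq hdeg ⟨r, hqr⟩
  have hr : r.Monic := hq.of_mul_monic_left (hqr ▸ monic_sexticModThree)
  have hsum : q.natDegree + r.natDegree = 6 := by
    rw [← hq.natDegree_mul hr, ← hqr, natDegree_sexticModThree]
  rw [hq.as_sum, hr.as_sum] at hqr
  simp only [Nat.reduceDiv, Finset.mem_Ioc] at hdeg
  obtain ⟨hd, he⟩ | ⟨hd, he⟩ | ⟨hd, he⟩ : q.natDegree = 1 ∧ r.natDegree = 5 ∨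
      q.natDegree = 2 ∧ r.natDegree = 4 ∨ q.natDegree = 3 ∧ r.natDegree = 3 := by omega
  all_goals simp only [hd, he, Finset.sum_range_succ, Finset.sum_range_zero] at hqr
  · exact sexticModThree_ne_linear_mul_quintic (q.coeff 0) (r.coeff 0) (r.coeff 1) (r.coeff 2)
      (r.coeff 3) (r.coeff 4) (hqr.trans (by ring))
  · exact sexticModThree_ne_quadratic_mul_quartic (q.coeff 0) (q.coeff 1) (r.coeff 0) (r.coeff 1)
      (r.coeff 2) (r.coeff 3) (hqr.trans (by ring))
  · exact sexticModThree_ne_cubic_mul_cubic (q.coeff 0) (q.coeff 1) (q.coeff 2) (r.coeff 0)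
      (r.coeff 1) (r.coeff 2) (hqr.trans (by ring))

theorem irreducible_sextic_rat : Irreducible (sextic ℚ) := by
  have hmod : Irreducible ((sextic ℤ).map (Int.castRingHom (ZMod 3))) := by
    rw [map_sextic, sextic_zmod_three, irreducible_isUnit_mul (isUnit_C.mpr (by decide))]
    exact irreducible_sexticModThree
  have hint : Irreducible (sextic ℤ) :=
    isPrimitive_sextic_int.irreducible_of_irreducible_map_of_leadingCoeff
      (by rw [leadingCoeff_sextic_int]; decide) hmod
  rw [← map_sextic (Int.castRingHom ℚ)]
  exact (IsPrimitive.Int.irreducible_iff_irreducible_map_cast isPrimitive_sextic_int).mp hint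

/-- `cubicFactor ω = 350 ∏ (X - ν)`, the product over the three roots `ε` of
`7ε³ + 43ε² + 77ε + 49` of `ν = (21ωε² + 87ωε + 385ε + 35ω) / 770`. -/
noncomputable def cubicFactor {R : Type*} [CommRing R] (w : R) : R[X] :=
  C 350 * X ^ 3 + C (1075 + 45 * w) * X ^ 2 + C (865 + 115 * w) * X + C (135 + 61 * w)

theorem sextic_mul_eq_cubicFactor_mul {R : Type*} [CommRing R] {w : R} (hw : w ^ 2 = -55) :
    140 * sextic R = cubicFactor w * cubicFactor (-w) := by
  have hC : C w ^ 2 = -55 := by rw [← map_pow, hw, map_neg, map_ofNat]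
  simp only [sextic, cubicFactor, map_add, map_mul, map_neg, map_ofNat]
  linear_combination (45 * X ^ 2 + 115 * X + 61) ^ 2 * hC

theorem natDegree_cubicFactor {K : Type*} [Field K] [CharZero K] (w : K) :
    (cubicFactor w).natDegree = 3 := by
  unfold cubicFactor
  compute_degree!

theorem not_irreducible_sextic {K : Type*} [Field K] [CharZero K] {w : K} (hw : w ^ 2 = -55) :
    ¬ Irreducible (sextic K) := by
  intro hirr
  have hfac : sextic K = (C 140⁻¹ * cubicFactor w) * cubicFactor (-w) := by
    rw [mul_assoc, ← sextic_mul_eq_cubicFactor_mul hw, ← mul_assoc, ← C_ofNat, ← C_mul,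
      inv_mul_cancel₀ (by norm_num), C_1, one_mul]
  rcases hirr.isUnit_or_isUnit hfac with hu | hu <;>
  · have := natDegree_eq_zero_of_isUnit hu
    simp [natDegree_C_mul, natDegree_cubicFactor] at this

theorem exists_sq_eq_neg_55 : ∃ w : Kfield13, w ^ 2 = -55 := by
  refine ⟨⟨Complex.I * ((Real.sqrt 55 : ℝ) : ℂ), IntermediateField.mem_adjoin_simple_self ℚ _⟩, ?_⟩
  apply Subtype.ext
  simp only [IntermediateField.coe_pow, IntermediateField.coe_neg, mul_pow, Complex.I_sq,
    ← Complex.ofReal_pow, Real.sq_sqrt (by norm_num : (0 : ℝ) ≤ 55)]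
  rw [neg_one_mul, Complex.ofReal_ofNat]
  rfl

theorem stmt_13 :
    Irreducible (875 * X ^ 6 + 5375 * X ^ 5 + 13375 * X ^ 4 + 18025 * X ^ 3
      + 14770 * X ^ 2 + 7180 * X + 1592 : ℚ[X]) ∧
    ¬ Irreducible ((875 * X ^ 6 + 5375 * X ^ 5 + 13375 * X ^ 4 + 18025 * X ^ 3
      + 14770 * X ^ 2 + 7180 * X + 1592 : ℚ[X]).map (algebraMap ℚ Kfield13)) := by
  obtain ⟨w, hw⟩ := exists_sq_eq_neg_55
  exact ⟨irreducible_sextic_rat, map_sextic (algebraMap ℚ Kfield13) ▸ not_irreducible_sextic hw⟩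
end

section
/- The polynomial 57Z^3 − 3196Z^2 + 221Z − 7 is irreducible over Q and has exactly one real root. -/
open Polynomial

lemma no_int_root : ∀ n d : ℤ, 0 < d → IsCoprime n d →
    57*n^3 - 3196*n^2*d + 221*n*d^2 - 7*d^3 ≠ 0 := by
  intro n d hd cop key
  have h1 : n ∣ 7 * d ^ 3 :=
    ⟨57*n^2 - 3196*n*d + 221*d^2, by linear_combination -key⟩
  have hn7 : n ∣ 7 := (cop.pow_right).dvd_of_dvd_mul_right h1
  have h2 : d ∣ 57 * n ^ 3 :=
    ⟨3196*n^2 - 221*n*d + 7*d^2, by linear_combination key⟩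
  have hd57 : d ∣ 57 := (cop.symm.pow_right).dvd_of_dvd_mul_right h2
  have hnvals : n = 1 ∨ n = -1 ∨ n = 7 ∨ n = -7 := by
    have hnat : n.natAbs ∣ 7 := by
      have := Int.natAbs_dvd_natAbs.mpr hn7
      simpa using this
    have hb : n.natAbs ≤ 7 := Nat.le_of_dvd (by norm_num) hnat
    obtain ⟨hb1, hb2⟩ : -7 ≤ n ∧ n ≤ 7 := by omega
    interval_cases n <;> revert hnat <;> decide
  have hdvals : d = 1 ∨ d = 3 ∨ d = 19 ∨ d = 57 := by
    have hnat : d.natAbs ∣ 57 := by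
      have := Int.natAbs_dvd_natAbs.mpr hd57
      simpa using this
    have hb : d.natAbs ≤ 57 := Nat.le_of_dvd (by norm_num) hnat
    have hb2 : d ≤ 57 := by omega
    interval_cases d <;> revert hnat <;> decide
  rcases hnvals with rfl | rfl | rfl | rfl <;>
    rcases hdvals with rfl | rfl | rfl | rfl <;> norm_num at key

lemma real_root_unique : ∀ x y : ℝ, 57*x^3 - 3196*x^2 + 221*x - 7 = 0 →
    57*y^3 - 3196*y^2 + 221*y - 7 = 0 → x = y := by
  intro x y hx hy
  by_contra hne
  have key : 57*(x^2 + x*y + y^2) - 3196*(x + y) + 221 = 0 := by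
    apply mul_left_cancel₀ (sub_ne_zero.mpr hne)
    rw [mul_zero]
    linear_combination hx - hy
  have H : ((x - y)*(57*x + 114*y - 3196)*(114*x + 57*y - 3196))^2 =
      (-412577904375 : ℝ) := by
    linear_combination
      (-5000211*x^3 + 280362708*x^2 - 19386783*x - 129857027989) * hx +
      (740772*y^4 + 1481544*x*y^3 - 83070432*y^3 - 2777895*x^2*y^2 +
        20767608*x*y^2 + 2908236444*y^2 - 3518667*x^3*y + 301130316*x^2*y -
        5242867524*x*y - 32484233488*y + 5740983*x^4 - 363433140*x^3 +
        2927623227*x^2 + 97372180440*x - 2246250188) * key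
  nlinarith [sq_nonneg ((x - y)*(57*x + 114*y - 3196)*(114*x + 57*y - 3196))]

theorem stmt_19 :
    Irreducible (57 * X ^ 3 - 3196 * X ^ 2 + 221 * X - 7 : ℚ[X]) ∧
    (∃! x : ℝ, 57 * x ^ 3 - 3196 * x ^ 2 + 221 * x - 7 = 0) := by
  constructor
  · have hdeg : (57 * X ^ 3 - 3196 * X ^ 2 + 221 * X - 7 : ℚ[X]).natDegree = 3 := by
      compute_degree!
    rw [irreducible_iff_roots_eq_zero_of_degree_le_three (by omega) (by omega)]
    rw [Multiset.eq_zero_iff_forall_notMem]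
    intro a ha
    rw [mem_roots (by intro h; rw [h] at hdeg; simp at hdeg)] at ha
    have h : 57*a^3 - 3196*a^2 + 221*a - 7 = 0 := by simpa using ha
    have e : (a.num : ℚ) = a * (a.den : ℚ) := by
      have e' := Rat.num_div_den a
      rwa [div_eq_iff (by exact_mod_cast a.den_nz : ((a.den:ℚ)) ≠ 0)] at e'
    have keyQ : 57*(a.num:ℚ)^3 - 3196*(a.num:ℚ)^2*(a.den:ℚ) +
        221*(a.num:ℚ)*(a.den:ℚ)^2 - 7*(a.den:ℚ)^3 = 0 := by
      rw [e]
      linear_combination (a.den:ℚ)^3 * h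
    have keyZ : 57*a.num^3 - 3196*a.num^2*(a.den:ℤ) +
        221*a.num*(a.den:ℤ)^2 - 7*(a.den:ℤ)^3 = 0 := by exact_mod_cast keyQ
    have cop : IsCoprime a.num ((a.den : ℤ)) := by
      rw [Int.isCoprime_iff_gcd_eq_one]
      simpa [Int.gcd] using a.reduced
    exact no_int_root a.num a.den (by exact_mod_cast a.pos) cop keyZ
  · have hcont : Continuous fun x : ℝ => 57*x^3 - 3196*x^2 + 221*x - 7 := by
      continuity
    have hmem : (0:ℝ) ∈ Set.Icc ((fun x : ℝ => 57*x^3 - 3196*x^2 + 221*x - 7) 56)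
        ((fun x : ℝ => 57*x^3 - 3196*x^2 + 221*x - 7) 57) := by
      norm_num
    have := intermediate_value_Icc (by norm_num : (56:ℝ) ≤ 57) hcont.continuousOn hmem
    obtain ⟨x, -, hx⟩ := this
    exact ⟨x, hx, fun y hy => real_root_unique y x hy hx⟩
end
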